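/- arXiv:2001.10928 — 2 statements merged into one kernel-verified Lean document; each statement's English description precedes it below -/
import Mathlib

section
/- The matrix Σ_{i=1}^{m} (eᵢᵀ L₂₂ 𝟏ₘ) eᵢ eᵢᵀ − L₂₁ L₁₁⁻¹ L₁₂, i.e., the diagonal matrix of row sums of L₂₂ minus L₂₁ L₁₁⁻¹ L₁₂, is a graph Laplacian: it is symmetric, has nonpositive off-diagonal entries, and annihilates the all-ones vector 𝟏ₘ. -/
/-!
`L₁₁` is a symmetric matrix with nonpositive off-diagonal entries and nonnegative row sums
(because `L₁₁𝟏 = -L₁₂𝟏` and `L₁₂ ≤ 0`), hence positive semidefinite. Such a matrix, if invertible,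
has an entrywise nonnegative inverse: when `A x ≥ 0`, the vector `z = |x| - x` satisfies
`zᵀ A z ≤ 0` (replacing `x` by `|x|` can only lower the quadratic form), so `A z = 0`, `z = 0` and
`x ≥ 0`. Hence `L₂₁ L₁₁⁻¹ L₁₂` is entrywise nonnegative, which gives the sign pattern; symmetry is
inherited from `L`, and `L₁₂𝟏 = -L₁₁𝟏`, `L₂₁𝟏 = -L₂₂𝟏` give `L₂₁ L₁₁⁻¹ L₁₂ 𝟏 = L₂₂𝟏`, the vector of
row sums of `L₂₂`.
-/

open Matrix

namespace Matrix

variable {ι : Type*} [Fintype ι]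

theorem dotProduct_mulVec_eq_sum_rowSum_sub {A : Matrix ι ι ℝ} (hA : A.IsSymm) (x : ι → ℝ) :
    x ⬝ᵥ A *ᵥ x =
      ∑ i, (∑ j, A i j) * x i ^ 2 - (∑ i, ∑ j, A i j * (x i - x j) ^ 2) / 2 := by
  have hcol : ∑ i, ∑ j, A i j * x j ^ 2 = ∑ i, (∑ j, A i j) * x i ^ 2 := by
    rw [Finset.sum_comm]
    refine Finset.sum_congr rfl fun i _ => ?_
    rw [Finset.sum_mul]
    exact Finset.sum_congr rfl fun j _ => by rw [hA.apply i j]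
  have hexpand : ∑ i, ∑ j, A i j * (x i - x j) ^ 2 =
      ∑ i, (∑ j, A i j) * x i ^ 2 - 2 * (x ⬝ᵥ A *ᵥ x) + ∑ i, ∑ j, A i j * x j ^ 2 := by
    simp only [dotProduct, mulVec, Finset.mul_sum, Finset.sum_mul, ← Finset.sum_sub_distrib,
      ← Finset.sum_add_distrib]
    exact Finset.sum_congr rfl fun i _ => Finset.sum_congr rfl fun j _ => by ring
  rw [hexpand, hcol]
  ring

theorem posSemidef_of_isSymm_of_rowSum_nonneg {A : Matrix ι ι ℝ} (hA : A.IsSymm)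
    (hoff : ∀ i j, i ≠ j → A i j ≤ 0) (hrow : ∀ i, 0 ≤ ∑ j, A i j) : A.PosSemidef := by
  refine .of_dotProduct_mulVec_nonneg (isHermitian_iff_isSymm.2 hA) fun x => ?_
  rw [star_trivial, dotProduct_mulVec_eq_sum_rowSum_sub hA]
  have hdiag : 0 ≤ ∑ i, (∑ j, A i j) * x i ^ 2 :=
    Finset.sum_nonneg fun i _ => mul_nonneg (hrow i) (sq_nonneg _)
  have hedges : ∑ i, ∑ j, A i j * (x i - x j) ^ 2 ≤ 0 := by
    refine Finset.sum_nonpos fun i _ => Finset.sum_nonpos fun j _ => ?_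
    rcases eq_or_ne i j with rfl | hij
    · simp
    · exact mul_nonpos_of_nonpos_of_nonneg (hoff i j hij) (sq_nonneg _)
  linarith

theorem abs_dotProduct_mulVec_abs_le {A : Matrix ι ι ℝ} (hoff : ∀ i j, i ≠ j → A i j ≤ 0)
    (x : ι → ℝ) : |x| ⬝ᵥ A *ᵥ |x| ≤ x ⬝ᵥ A *ᵥ x := by
  simp only [dotProduct, mulVec, Finset.mul_sum, Pi.abs_apply]
  refine Finset.sum_le_sum fun i _ => Finset.sum_le_sum fun j _ => ?_
  rcases eq_or_ne i j with rfl | hij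
  · rw [mul_left_comm, abs_mul_abs_self, mul_left_comm]
  · have h := le_abs_self (x i * x j)
    rw [abs_mul] at h
    nlinarith [hoff i j hij]

variable [DecidableEq ι]

theorem diagonal_rowSum_mulVec_one (A : Matrix ι ι ℝ) :
    diagonal (fun i => ∑ j, A i j) *ᵥ 1 = A *ᵥ 1 := by
  ext i
  rw [mulVec_diagonal]
  simp [mulVec, dotProduct]

theorem nonneg_of_mulVec_nonneg {A : Matrix ι ι ℝ} (hA : A.PosSemidef)
    (hoff : ∀ i j, i ≠ j → A i j ≤ 0) (hdet : IsUnit A.det) {x : ι → ℝ} (hx : 0 ≤ A *ᵥ x) :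
    0 ≤ x := by
  have hxA : x ⬝ᵥ A *ᵥ |x| = |x| ⬝ᵥ A *ᵥ x := by
    rw [dotProduct_mulVec, ← mulVec_transpose, isHermitian_iff_isSymm.1 hA.1 |>.eq, dotProduct_comm]
  have hq : (|x| - x) ⬝ᵥ A *ᵥ (|x| - x) ≤ 0 := by
    have habs := abs_dotProduct_mulVec_abs_le hoff x
    have hAx : x ⬝ᵥ A *ᵥ x ≤ |x| ⬝ᵥ A *ᵥ x :=
      dotProduct_le_dotProduct_of_nonneg_right (le_abs_self x) hx
    simp only [mulVec_sub, sub_dotProduct, dotProduct_sub, hxA]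
    linarith
  have hAz : A *ᵥ (|x| - x) = 0 :=
    (hA.dotProduct_mulVec_zero_iff _).1 (le_antisymm hq (hA.dotProduct_mulVec_nonneg _))
  have hz := eq_zero_of_mulVec_eq_zero hdet.ne_zero hAz
  rw [sub_eq_zero] at hz
  exact hz ▸ abs_nonneg x

theorem inv_apply_nonneg {A : Matrix ι ι ℝ} (hA : A.PosSemidef)
    (hoff : ∀ i j, i ≠ j → A i j ≤ 0) (hdet : IsUnit A.det) (i j : ι) : 0 ≤ A⁻¹ i j := by
  have hcol : A *ᵥ (A⁻¹ *ᵥ Pi.single j 1) = Pi.single j 1 := by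
    rw [mulVec_mulVec, mul_nonsing_inv A hdet, one_mulVec]
  have h := nonneg_of_mulVec_nonneg hA hoff hdet (hcol ▸ Pi.single_nonneg.2 zero_le_one) i
  simpa [mulVec_single_one] using h

section Blocks

variable {α β : Type*} [Fintype α]

theorem isSymm_mul_inv_mul {R : Type*} [CommRing R] [DecidableEq α] {A : Matrix α α R}
    {B : Matrix α β R} {C : Matrix β α R} (hA : A.IsSymm) (hBC : Bᵀ = C) :
    (C * A⁻¹ * B).IsSymm := by
  rw [IsSymm, transpose_mul, transpose_mul, transpose_nonsing_inv, hA.eq, hBC, ← hBC,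
    transpose_transpose, Matrix.mul_assoc]

theorem mul_mul_apply_nonneg {γ : Type*} {C : Matrix β α ℝ} {M : Matrix α α ℝ}
    {B : Matrix α γ ℝ} (hC : ∀ i k, C i k ≤ 0) (hM : ∀ k l, 0 ≤ M k l) (hB : ∀ l j, B l j ≤ 0)
    (i : β) (j : γ) : 0 ≤ (C * M * B) i j := by
  refine Finset.sum_nonneg fun l _ => mul_nonneg_of_nonpos_of_nonpos ?_ (hB l j)
  exact Finset.sum_nonpos fun k _ => mul_nonpos_of_nonpos_of_nonneg (hC i k) (hM k l)

variable [Fintype β]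

theorem mul_inv_mul_mulVec_one [DecidableEq α] {A : Matrix α α ℝ} {B : Matrix α β ℝ}
    {C : Matrix β α ℝ} {E : Matrix β β ℝ} (hdet : IsUnit A.det) (hAB : A *ᵥ 1 + B *ᵥ 1 = 0)
    (hCE : C *ᵥ 1 + E *ᵥ 1 = 0) : (C * A⁻¹ * B) *ᵥ 1 = E *ᵥ 1 := by
  rw [← mulVec_mulVec, ← mulVec_mulVec, eq_neg_of_add_eq_zero_right hAB, mulVec_neg,
    mulVec_mulVec, nonsing_inv_mul A hdet, one_mulVec, mulVec_neg, eq_neg_of_add_eq_zero_left hCE,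
    neg_neg]

theorem fromBlocks_mulVec_one_eq_zero_iff {A : Matrix α α ℝ} {B : Matrix α β ℝ}
    {C : Matrix β α ℝ} {E : Matrix β β ℝ} :
    fromBlocks A B C E *ᵥ 1 = 0 ↔ A *ᵥ 1 + B *ᵥ 1 = 0 ∧ C *ᵥ 1 + E *ᵥ 1 = 0 := by
  simp [fromBlocks_mulVec, funext_iff, Sum.forall]

end Blocks

end Matrix

theorem rowSumDiag_sub_schur_term_is_graph_laplacian_general
    (n m : ℕ)
    (L11 : Matrix (Fin (n - m)) (Fin (n - m)) ℝ)
    (L12 : Matrix (Fin (n - m)) (Fin m) ℝ)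
    (L21 : Matrix (Fin m) (Fin (n - m)) ℝ)
    (L22 : Matrix (Fin m) (Fin m) ℝ)
    (L : Matrix (Fin (n - m) ⊕ Fin m) (Fin (n - m) ⊕ Fin m) ℝ)
    (hL : L = Matrix.fromBlocks L11 L12 L21 L22)
    (hsym : L.IsSymm)
    (hoff : ∀ i j, i ≠ j → L i j ≤ 0)
    (hone : L *ᵥ (fun _ => (1 : ℝ)) = 0)
    (hinv : IsUnit L11.det)
    (D : Matrix (Fin m) (Fin m) ℝ)
    (hD : D = Matrix.diagonal (fun i => ∑ j, L22 i j) - L21 * L11⁻¹ * L12) :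
    D.IsSymm ∧ (∀ i j, i ≠ j → D i j ≤ 0) ∧ D *ᵥ (fun _ => (1 : ℝ)) = 0 := by
  subst hL hD
  obtain ⟨hsym₁₁, hsym₁₂, -, -⟩ := isSymm_fromBlocks_iff.1 hsym
  obtain ⟨hrow₁, hrow₂⟩ := fromBlocks_mulVec_one_eq_zero_iff.1 hone
  have hoff₁₁ : ∀ i j, i ≠ j → L11 i j ≤ 0 := fun i j h => hoff (.inl i) (.inl j) (by simpa)
  have h₁₂ : ∀ i j, L12 i j ≤ 0 := fun i j => hoff (.inl i) (.inr j) Sum.inl_ne_inr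
  have h₂₁ : ∀ i j, L21 i j ≤ 0 := fun i j => hoff (.inr i) (.inl j) Sum.inr_ne_inl
  have hrow₁₁ : ∀ i, 0 ≤ ∑ j, L11 i j := fun i => by
    have h := congrFun hrow₁ i
    simp only [Pi.add_apply, mulVec, dotProduct, Pi.one_apply, mul_one, Pi.zero_apply] at h
    linarith [Finset.sum_nonpos fun j (_ : j ∈ Finset.univ) => h₁₂ i j]
  have hinv_nonneg := inv_apply_nonneg
    (posSemidef_of_isSymm_of_rowSum_nonneg hsym₁₁ hoff₁₁ hrow₁₁) hoff₁₁ hinv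
  refine ⟨(isSymm_diagonal _).sub (isSymm_mul_inv_mul hsym₁₁ hsym₁₂), fun i j hij => ?_, ?_⟩
  · rw [Matrix.sub_apply, diagonal_apply_ne _ hij, zero_sub, neg_nonpos]
    exact mul_mul_apply_nonneg h₂₁ hinv_nonneg h₁₂ i j
  · change _ *ᵥ 1 = 0
    rw [sub_mulVec, diagonal_rowSum_mulVec_one L22, mul_inv_mul_mulVec_one hinv hrow₁ hrow₂,
      sub_self]

/-- The diagonal matrix of row sums of `L₂₂` minus `L₂₁ L₁₁⁻¹ L₁₂` is a graph
Laplacian: it is symmetric, has nonpositive off-diagonal entries, and annihilates `𝟏ₘ`. -/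
theorem rowSumDiag_sub_schur_term_is_graph_laplacian
    (n m : ℕ) (hm : 0 < m) (hmn : m < n)
    (L11 : Matrix (Fin (n - m)) (Fin (n - m)) ℝ)
    (L12 : Matrix (Fin (n - m)) (Fin m) ℝ)
    (L21 : Matrix (Fin m) (Fin (n - m)) ℝ)
    (L22 : Matrix (Fin m) (Fin m) ℝ)
    (L : Matrix (Fin (n - m) ⊕ Fin m) (Fin (n - m) ⊕ Fin m) ℝ)
    (hL : L = Matrix.fromBlocks L11 L12 L21 L22)
    (hsym : L.IsSymm)
    (hoff : ∀ i j, i ≠ j → L i j ≤ 0)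
    (hone : L *ᵥ (fun _ => (1 : ℝ)) = 0)
    (hinv : IsUnit L11.det)
    (D : Matrix (Fin m) (Fin m) ℝ)
    (hD : D = Matrix.diagonal (fun i => ∑ j, L22 i j) - L21 * L11⁻¹ * L12) :
    D.IsSymm ∧ (∀ i j, i ≠ j → D i j ≤ 0) ∧ D *ᵥ (fun _ => (1 : ℝ)) = 0 :=
  rowSumDiag_sub_schur_term_is_graph_laplacian_general n m L11 L12 L21 L22 L hL hsym hoff hone hinv
    D hD
end

section
/- (Continuous right inverse of the discrete trace operator.) Assume ℓ ≥ 2. For every φ : ℤ/kℤ → ℝ, the averaging extension u defined by u(i,j) = ((j−1)/(ℓ−1))·a + (1 − (j−1)/(ℓ−1))·a(i,j) satisfies u(i,1) = φ(i) for all i and |u|_G² ≤ (2c + 233/9) · |φ|_Γ². -/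
open Real Finset

noncomputable section

/-- The cycle distance on `ℤ/kℤ`. -/
def cycDist (k : ℕ) (p q : ZMod k) : ℕ := min (p - q).val (q - p).val

/-- The boundary seminorm squared, summed over unordered pairs of distinct elements. -/
def bSemiSq (k : ℕ) [NeZero k] (φ : ZMod k → ℝ) : ℝ :=
  (1 / 2) * ∑ p : ZMod k, ∑ q : ZMod k,
    if p ≠ q then (φ p - φ q) ^ 2 / (cycDist k p q : ℝ) ^ 2 else 0

/-- The energy seminorm squared on `G_{k,ℓ} = C_k □ P_ℓ`. -/
def energySq (k ℓ : ℕ) [NeZero k] (u : ZMod k → ℕ → ℝ) : ℝ :=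
  (∑ i : ZMod k, ∑ j ∈ Finset.Icc 1 ℓ, (u (i + 1) j - u i j) ^ 2)
  + ∑ i : ZMod k, ∑ j ∈ Finset.Icc 1 (ℓ - 1), (u i (j + 1) - u i j) ^ 2

/-- The global average `a = (1/k) Σ_p φ(p)`. -/
def globalAvg (k : ℕ) [NeZero k] (φ : ZMod k → ℝ) : ℝ :=
  (1 / (k : ℝ)) * ∑ p : ZMod k, φ p

/-- The local average `a(i,j) = (1/(2j−1)) Σ_{h=−(j−1)}^{j−1} φ(i+h)`. -/
def localAvg (k : ℕ) (φ : ZMod k → ℝ) (i : ZMod k) (j : ℕ) : ℝ :=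
  (1 / (2 * (j : ℝ) - 1)) * ∑ h ∈ Finset.Icc (-(j : ℤ) + 1) ((j : ℤ) - 1), φ (i + (h : ZMod k))

/-- The averaging extension `u(i,j) = ((j−1)/(ℓ−1))·a + (1 − (j−1)/(ℓ−1))·a(i,j)`. -/
def avgExt (k ℓ : ℕ) [NeZero k] (φ : ZMod k → ℝ) (i : ZMod k) (j : ℕ) : ℝ :=
  (((j : ℝ) - 1) / ((ℓ : ℝ) - 1)) * globalAvg k φ
    + (1 - ((j : ℝ) - 1) / ((ℓ : ℝ) - 1)) * localAvg k φ i j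

/-!
The trace identity holds because the window of radius `0` is a single point. For the energy,
regroup the boundary seminorm by the shift `s = p - q`: with
`shiftEnergy φ s = ∑ i, (φ (i + s) - φ i) ^ 2 / d(s, 0) ^ 2`, any family of distinct shifts has
total energy at most `2 |φ|_Γ²`.

A horizontal difference of local averages at height `j` is `(φ (i + j) - φ (i + 1 - j)) / (2j - 1)`,
which costs the energy at shift `2j - 1`. A vertical difference splits into
`(a - a(i, j + 1)) / (ℓ - 1)`, controlled by the variance of `φ` (at most `k/4 · |φ|_Γ²` because
`d ≤ k/2`), and `a(i, j + 1) - a(i, j) = (X + Y) / (2j + 1)`, where `X` and `Y` are the deviations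
of the two new endpoint values from the old mean. By Jensen, `X` and `Y` are controlled by the shifts
`1, …, 2j - 1`. After summing over `j`, each shift `m` has total weight
`m² ∑_{2j - 1 ≥ m} 4 / ((2j + 1)² (2j - 1)) ≤ 1`. Altogether
`|u|_G² ≤ (2 + k / (2(ℓ - 1)) + 4) |φ|_Γ² ≤ (2c + 6) |φ|_Γ²`.
-/

section ShiftDifferences

variable {G : Type*} [AddCommGroup G] [Fintype G] (φ : G → ℝ)

def shiftSq (s : G) : ℝ := ∑ i, (φ (i + s) - φ i) ^ 2

lemma shiftSq_nonneg (s : G) : 0 ≤ shiftSq φ s :=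
  sum_nonneg fun _ _ => sq_nonneg _

lemma shiftSq_zero : shiftSq φ 0 = 0 := by simp [shiftSq]

lemma sum_sq_sub_eq_shiftSq (e h : G) :
    ∑ i, (φ (i + e) - φ (i + h)) ^ 2 = shiftSq φ (e - h) :=
  Fintype.sum_equiv (Equiv.addRight h) _ _ fun i => by simp [add_assoc]

lemma shiftSq_neg (s : G) : shiftSq φ (-s) = shiftSq φ s := by
  rw [← zero_sub, ← sum_sq_sub_eq_shiftSq, shiftSq]
  simp only [add_zero]
  exact sum_congr rfl fun _ _ => by ring

lemma sum_shiftSq :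
    ∑ s, shiftSq φ s = 2 * Fintype.card G * ∑ i, (φ i - (Fintype.card G : ℝ)⁻¹ * ∑ j, φ j) ^ 2 := by
  have hN : (Fintype.card G : ℝ) ≠ 0 := by positivity
  have hswap : ∑ s, shiftSq φ s = ∑ i, ∑ j, (φ j - φ i) ^ 2 := by
    simp only [shiftSq]
    rw [sum_comm]
    exact sum_congr rfl fun i _ => Equiv.sum_comp (Equiv.addLeft i) (fun j => (φ j - φ i) ^ 2)
  rw [hswap]
  simp only [sub_sq, sum_add_distrib, sum_sub_distrib, ← sum_mul, ← mul_sum, sum_const,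
    card_univ, nsmul_eq_mul, mul_pow]
  field_simp
  ring

lemma sq_sub_mean_le {ι : Type*} {H : Finset ι} (hH : H.Nonempty) (x : ℝ) (y : ι → ℝ) :
    (x - (#H : ℝ)⁻¹ * ∑ h ∈ H, y h) ^ 2 ≤ (#H : ℝ)⁻¹ * ∑ h ∈ H, (x - y h) ^ 2 := by
  have hH' : (#H : ℝ) ≠ 0 := by exact_mod_cast hH.card_pos.ne'
  have hx : x - (#H : ℝ)⁻¹ * ∑ h ∈ H, y h = (∑ h ∈ H, (x - y h)) / #H := by
    rw [sum_sub_distrib, sum_const, nsmul_eq_mul]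
    field_simp
  rw [hx, inv_mul_eq_div]
  exact sum_div_card_sq_le_sum_sq_div_card

lemma sum_sq_sub_mean_shift_le {ι : Type*} {H : Finset ι} (hH : H.Nonempty) (τ : ι → G)
    (ψ : G → ℝ) :
    ∑ i, (ψ i - (#H : ℝ)⁻¹ * ∑ h ∈ H, φ (i + τ h)) ^ 2
      ≤ (#H : ℝ)⁻¹ * ∑ h ∈ H, ∑ i, (ψ i - φ (i + τ h)) ^ 2 := by
  calc _ ≤ ∑ i, (#H : ℝ)⁻¹ * ∑ h ∈ H, (ψ i - φ (i + τ h)) ^ 2 :=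
        sum_le_sum fun i _ => sq_sub_mean_le hH _ _
    _ = _ := by rw [← mul_sum, sum_comm]

end ShiftDifferences

lemma Int.sum_Icc_add_one_sub {M : Type*} [AddCommGroup M] (F : ℤ → M) {a b : ℤ}
    (hab : a ≤ b + 1) :
    ∑ h ∈ Icc a b, (F (h + 1) - F h) = F (b + 1) - F a := by
  have hshift : ∑ h ∈ Icc a b, F (h + 1) = ∑ h ∈ Icc (a + 1) (b + 1), F h := by
    rw [← map_add_right_Icc, sum_map]
    rfl
  have hbot := sum_insert (f := F) (s := Icc (a + 1) (b + 1)) (a := a) (by simp)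
  have htop := sum_insert (f := F) (s := Icc a b) (a := b + 1) (by simp)
  rw [insert_Icc_add_one_left_eq_Icc hab] at hbot
  rw [insert_Icc_right_eq_Icc_add_one hab] at htop
  rw [sum_sub_distrib, hshift, sub_eq_sub_iff_add_eq_add, add_comm, ← hbot, htop]

lemma sum_Icc_inv_cube_le {a : ℕ} (ha : 1 ≤ a) (b : ℕ) :
    ∑ n ∈ Icc a b, (4 : ℝ) / ((2 * n + 1) ^ 2 * (2 * n - 1)) ≤ 1 / (2 * (a : ℝ) - 1) ^ 2 := by
  set g : ℕ → ℝ := fun n => 1 / (2 * (n : ℝ) - 1) ^ 2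
  have hterm : ∀ n ∈ Icc a b, (4 : ℝ) / ((2 * n + 1) ^ 2 * (2 * n - 1)) ≤ -(g (n + 1) - g n) := by
    intro n hn
    have hn1 : (1 : ℝ) ≤ n := by exact_mod_cast ha.trans (mem_Icc.mp hn).1
    have hpos : (0 : ℝ) < 2 * n - 1 := by linarith
    have hdiff : g n - g (n + 1) = 8 * n / ((2 * n - 1) ^ 2 * (2 * n + 1) ^ 2) := by
      have : (2 * ((n + 1 : ℕ) : ℝ) - 1) = 2 * n + 1 := by push_cast; ring
      simp only [g, this]
      field_simp
      ring
    rw [neg_sub, hdiff, div_le_div_iff₀ (mul_pos (by positivity) hpos)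
      (mul_pos (pow_pos hpos 2) (by positivity))]
    nlinarith [mul_pos (pow_pos (show (0 : ℝ) < 2 * n + 1 by linarith) 2) hpos]
  rcases le_or_gt a b with hab | hab
  · calc _ ≤ ∑ n ∈ Icc a b, -(g (n + 1) - g n) := sum_le_sum hterm
      _ = g a - g (b + 1) := by rw [sum_neg_distrib, sum_Icc_sub hab, neg_sub]
      _ ≤ g a := sub_le_self _ (by positivity)
  · rw [Icc_eq_empty_of_lt hab, sum_empty]
    positivity

lemma one_sub_div_sq_le_one {x y : ℝ} (hx : 0 ≤ x) (hxy : x ≤ y) : (1 - x / y) ^ 2 ≤ 1 := by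
  have h0 : 0 ≤ x / y := div_nonneg hx (hx.trans hxy)
  have h1 : x / y ≤ 1 := div_le_one_of_le₀ hxy (hx.trans hxy)
  nlinarith

section CycleEnergy

variable {k : ℕ}

lemma cycDist_add_left_self (q s : ZMod k) : cycDist k (q + s) q = cycDist k s 0 := by
  simp [cycDist]

lemma cycDist_natCast_le (m : ℕ) : cycDist k (m : ZMod k) 0 ≤ m :=
  (min_le_left _ _).trans (by simpa [ZMod.val_natCast] using Nat.mod_le m k)

lemma eq_zero_of_cycDist_eq_zero {s : ZMod k} (h : cycDist k s 0 = 0) : s = 0 := by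
  simp only [cycDist, sub_zero, zero_sub] at h
  rcases min_eq_iff.mp h with ⟨hs, -⟩ | ⟨hs, -⟩
  · exact (ZMod.val_eq_zero s).mp hs
  · exact neg_eq_zero.mp ((ZMod.val_eq_zero _).mp hs)

variable [NeZero k] (φ : ZMod k → ℝ)

lemma two_mul_cycDist_le (s : ZMod k) : 2 * cycDist k s 0 ≤ k := by
  have hs := (ZMod.val_lt s).le
  have hneg := ZMod.neg_val s
  simp only [cycDist, sub_zero, zero_sub]
  split_ifs at hneg <;> omega

def shiftEnergy (s : ZMod k) : ℝ := shiftSq φ s / (cycDist k s 0 : ℝ) ^ 2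

lemma shiftEnergy_nonneg (s : ZMod k) : 0 ≤ shiftEnergy φ s :=
  div_nonneg (shiftSq_nonneg φ s) (sq_nonneg _)

lemma sum_shiftEnergy : ∑ s, shiftEnergy φ s = 2 * bSemiSq k φ := by
  have hif : ∀ p q : ZMod k, (if p ≠ q then (φ p - φ q) ^ 2 / (cycDist k p q : ℝ) ^ 2 else 0)
      = (φ p - φ q) ^ 2 / (cycDist k p q : ℝ) ^ 2 := by
    intro p q
    split_ifs with h
    · rfl
    · simp [not_not.mp h]
  simp only [bSemiSq, hif, shiftEnergy, shiftSq, sum_div]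
  rw [← mul_assoc, mul_one_div_cancel two_ne_zero, one_mul, sum_comm]
  conv_rhs => rw [sum_comm]
  refine sum_congr rfl fun q _ => ?_
  exact Fintype.sum_equiv (Equiv.addLeft q) _ _ fun s => by
    simp [cycDist_add_left_self]

lemma bSemiSq_nonneg : 0 ≤ bSemiSq k φ := by
  have := sum_nonneg fun s (_ : s ∈ univ) => shiftEnergy_nonneg φ s
  rw [sum_shiftEnergy] at this
  linarith

lemma shiftSq_le_mul_shiftEnergy (s : ZMod k) {r : ℝ} (hr : (cycDist k s 0 : ℝ) ≤ r) :
    shiftSq φ s ≤ r ^ 2 * shiftEnergy φ s := by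
  rcases eq_or_ne (cycDist k s 0) 0 with hd | hd
  · rw [eq_zero_of_cycDist_eq_zero hd, shiftSq_zero]
    exact mul_nonneg (sq_nonneg r) (shiftEnergy_nonneg φ 0)
  · have hd' : (0 : ℝ) < cycDist k s 0 := by exact_mod_cast Nat.pos_of_ne_zero hd
    calc shiftSq φ s = (cycDist k s 0 : ℝ) ^ 2 * shiftEnergy φ s := by
          rw [shiftEnergy]; field_simp
      _ ≤ r ^ 2 * shiftEnergy φ s := by
          gcongr
          exact shiftEnergy_nonneg φ s

lemma sum_shiftEnergy_natCast_le {ι : Type*} (s : Finset ι) (σ : ι → ℕ) (hσ : Set.InjOn σ s)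
    (hk : ∀ x ∈ s, σ x < k) : ∑ x ∈ s, shiftEnergy φ (σ x) ≤ 2 * bSemiSq k φ := by
  classical
  have hinj : Set.InjOn (fun x => (σ x : ZMod k)) s := by
    intro x hx y hy hxy
    apply hσ hx hy
    simpa [ZMod.val_cast_of_lt (hk x hx), ZMod.val_cast_of_lt (hk y hy)] using
      congrArg ZMod.val hxy
  rw [← sum_shiftEnergy, ← sum_image hinj]
  exact sum_le_univ_sum_of_nonneg (shiftEnergy_nonneg φ)

lemma sum_sq_sub_globalAvg_le : ∑ i, (φ i - globalAvg k φ) ^ 2 ≤ k / 4 * bSemiSq k φ := by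
  have hk : (0 : ℝ) < k := by exact_mod_cast Nat.pos_of_ne_zero (NeZero.ne k)
  have hvar := sum_shiftSq φ
  rw [ZMod.card] at hvar
  have hbound : ∑ s, shiftSq φ s ≤ ∑ s : ZMod k, ((k : ℝ) / 2) ^ 2 * shiftEnergy φ s :=
    sum_le_sum fun s _ => shiftSq_le_mul_shiftEnergy φ s <| by
      rw [le_div_iff₀ two_pos, mul_comm]
      exact_mod_cast two_mul_cycDist_le s
  rw [← mul_sum, sum_shiftEnergy, hvar] at hbound
  rw [globalAvg, one_div]
  nlinarith

end CycleEnergy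

section LocalAverages

variable {k : ℕ} (φ : ZMod k → ℝ)

lemma localAvg_one (i : ZMod k) : localAvg k φ i 1 = φ i := by
  norm_num [localAvg]

lemma card_Icc_neg_add_one_sub_one {j : ℕ} (hj : 1 ≤ j) :
    (#(Icc (-(j : ℤ) + 1) ((j : ℤ) - 1)) : ℝ) = 2 * j - 1 := by
  rw [Int.card_Icc, ← Int.cast_natCast, Int.toNat_of_nonneg (by omega)]
  push_cast
  ring

lemma localAvg_eq_mean (i : ZMod k) {j : ℕ} (hj : 1 ≤ j) :
    localAvg k φ i j = (#(Icc (-(j : ℤ) + 1) ((j : ℤ) - 1)) : ℝ)⁻¹ *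
      ∑ h ∈ Icc (-(j : ℤ) + 1) ((j : ℤ) - 1), φ (i + h) := by
  rw [localAvg, card_Icc_neg_add_one_sub_one hj, one_div]

lemma localAvg_add_one_sub (i : ZMod k) {j : ℕ} (hj : 1 ≤ j) :
    localAvg k φ (i + 1) j - localAvg k φ i j
      = (φ (i + j) - φ (i + ((1 - j : ℤ) : ZMod k))) / (2 * j - 1) := by
  rw [localAvg, localAvg, ← mul_sub, ← sum_sub_distrib, one_div_mul_eq_div]
  congr 1
  calc ∑ h ∈ Icc (-(j : ℤ) + 1) ((j : ℤ) - 1), (φ (i + 1 + h) - φ (i + h))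
      = ∑ h ∈ Icc (-(j : ℤ) + 1) ((j : ℤ) - 1),
          ((fun h : ℤ => φ (i + h)) (h + 1) - (fun h : ℤ => φ (i + h)) h) :=
        sum_congr rfl fun h _ => by push_cast; ring_nf
    _ = φ (i + ((j - 1 + 1 : ℤ) : ZMod k)) - φ (i + ((-j + 1 : ℤ) : ZMod k)) :=
        Int.sum_Icc_add_one_sub (fun h : ℤ => φ (i + h)) (by omega)
    _ = _ := by push_cast; ring_nf

lemma localAvg_succ (i : ZMod k) {n : ℕ} (hn : 1 ≤ n) :
    (2 * n + 1) * localAvg k φ i (n + 1)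
      = φ (i + n) + φ (i - n) + (2 * n - 1) * localAvg k φ i n := by
  have hIcc : Icc (-((n + 1 : ℕ) : ℤ) + 1) ((n + 1 : ℕ) - 1)
      = insert (-(n : ℤ)) (insert (n : ℤ) (Icc (-(n : ℤ) + 1) ((n : ℤ) - 1))) := by
    ext h
    simp only [mem_Icc, mem_insert]
    omega
  have hn' : (2 * n - 1 : ℝ) ≠ 0 := by
    have : (1 : ℝ) ≤ n := by exact_mod_cast hn
    linarith
  have hcast : 2 * ((n + 1 : ℕ) : ℝ) - 1 = 2 * n + 1 := by push_cast; ring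
  have hn'' : (2 * n + 1 : ℝ) ≠ 0 := by positivity
  rw [localAvg, localAvg, hIcc, sum_insert (by simp; omega), sum_insert (by simp), hcast]
  push_cast
  field_simp
  simp only [← sub_eq_add_neg]
  ring

end LocalAverages

section Bounds

variable {k : ℕ} [NeZero k] (φ : ZMod k → ℝ)

lemma sum_sq_sub_localAvg_le (ψ : ZMod k → ℝ) {n : ℕ} (hn : 1 ≤ n) :
    ∑ i, (ψ i - localAvg k φ i n) ^ 2 ≤ (2 * n - 1 : ℝ)⁻¹ *
      ∑ h ∈ Icc (-(n : ℤ) + 1) ((n : ℤ) - 1), ∑ i, (ψ i - φ (i + h)) ^ 2 := by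
  simp_rw [localAvg_eq_mean φ _ hn]
  rw [← card_Icc_neg_add_one_sub_one hn]
  exact sum_sq_sub_mean_shift_le φ ⟨0, by simp; omega⟩ (fun h : ℤ => (h : ZMod k)) ψ

lemma sum_sq_globalAvg_sub_localAvg_le {n : ℕ} (hn : 1 ≤ n) :
    ∑ i, (globalAvg k φ - localAvg k φ i n) ^ 2 ≤ k / 4 * bSemiSq k φ := by
  have hN : (2 * n - 1 : ℝ) ≠ 0 := by
    rw [← card_Icc_neg_add_one_sub_one hn, Nat.cast_ne_zero, ← pos_iff_ne_zero, card_pos]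
    exact ⟨0, by simp; omega⟩
  have hshift : ∀ h : ℤ, ∑ i, (globalAvg k φ - φ (i + h)) ^ 2
      = ∑ i, (φ i - globalAvg k φ) ^ 2 := fun h => by
    calc _ = ∑ i, (globalAvg k φ - φ i) ^ 2 :=
          Fintype.sum_equiv (Equiv.addRight (h : ZMod k)) _ _ fun i => rfl
      _ = _ := sum_congr rfl fun i _ => by ring
  calc _ ≤ _ := sum_sq_sub_localAvg_le φ _ hn
    _ = ∑ i, (φ i - globalAvg k φ) ^ 2 := by
      rw [sum_congr rfl fun h _ => hshift h, sum_const, nsmul_eq_mul,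
        card_Icc_neg_add_one_sub_one hn, inv_mul_cancel_left₀ hN]
    _ ≤ _ := sum_sq_sub_globalAvg_le φ

lemma sum_sq_localAvg_add_one_sub_le {j : ℕ} (hj : 1 ≤ j) :
    ∑ i, (localAvg k φ (i + 1) j - localAvg k φ i j) ^ 2 ≤ shiftEnergy φ ((2 * j - 1 : ℕ)) := by
  have hm : ((2 * j - 1 : ℕ) : ℝ) = 2 * j - 1 := by
    rw [Nat.cast_sub (by omega)]
    push_cast
    ring
  have hpos : (0 : ℝ) < 2 * j - 1 := by rw [← hm]; exact_mod_cast (by omega : 0 < 2 * j - 1)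
  have hshift : (j : ZMod k) - ((1 - j : ℤ) : ZMod k) = ((2 * j - 1 : ℕ) : ZMod k) := by
    rw [Nat.cast_sub (by omega)]
    push_cast
    ring
  simp_rw [localAvg_add_one_sub φ _ hj, div_pow]
  rw [← sum_div, sum_sq_sub_eq_shiftSq, hshift, div_le_iff₀ (by positivity), ← hm]
  exact (shiftSq_le_mul_shiftEnergy φ _ (Nat.cast_le.mpr (cycDist_natCast_le _))).trans_eq
    (mul_comm _ _)

lemma sum_sq_add_sub_localAvg_le (e : ZMod k) {n : ℕ} (hn : 1 ≤ n) :
    ∑ i, (φ (i + e) - localAvg k φ i n) ^ 2 ≤ (2 * n - 1 : ℝ)⁻¹ *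
      ∑ h ∈ Icc (-(n : ℤ) + 1) ((n : ℤ) - 1), shiftSq φ (e - h) := by
  simp_rw [← sum_sq_sub_eq_shiftSq]
  exact sum_sq_sub_localAvg_le φ _ hn

lemma sum_Icc_shiftSq_natCast_sub (n : ℕ) :
    ∑ h ∈ Icc (-(n : ℤ) + 1) ((n : ℤ) - 1), shiftSq φ ((n : ZMod k) - h)
      = ∑ m ∈ Icc 1 (2 * n - 1), shiftSq φ (m : ZMod k) := by
  refine sum_nbij' (fun h => ((n : ℤ) - h).toNat) (fun m => (n : ℤ) - m) ?_ ?_ ?_ ?_ ?_ <;>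
    intro x hx <;> simp only [mem_Icc] at hx ⊢
  · omega
  · omega
  · omega
  · omega
  · rw [← Int.cast_natCast (R := ZMod k) ((n : ℤ) - x).toNat, Int.toNat_of_nonneg (by omega)]
    push_cast
    rfl

lemma sum_Icc_shiftSq_neg_natCast_sub (n : ℕ) :
    ∑ h ∈ Icc (-(n : ℤ) + 1) ((n : ℤ) - 1), shiftSq φ (-(n : ZMod k) - h)
      = ∑ m ∈ Icc 1 (2 * n - 1), shiftSq φ (m : ZMod k) := by
  refine sum_nbij' (fun h => ((n : ℤ) + h).toNat) (fun m => (m : ℤ) - n) ?_ ?_ ?_ ?_ ?_ <;>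
    intro x hx <;> simp only [mem_Icc] at hx ⊢
  · omega
  · omega
  · omega
  · omega
  · rw [← shiftSq_neg, ← Int.cast_natCast (R := ZMod k) ((n : ℤ) + x).toNat,
      Int.toNat_of_nonneg (by omega)]
    push_cast
    ring_nf

lemma sum_Icc_shiftSq_le (N : ℕ) :
    ∑ m ∈ Icc 1 N, shiftSq φ (m : ZMod k) ≤ ∑ m ∈ Icc 1 N, (m : ℝ) ^ 2 * shiftEnergy φ m :=
  sum_le_sum fun m _ => shiftSq_le_mul_shiftEnergy φ _ (Nat.cast_le.mpr (cycDist_natCast_le m))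

lemma sum_sq_localAvg_succ_sub_le {n : ℕ} (hn : 1 ≤ n) :
    ∑ i, (localAvg k φ i (n + 1) - localAvg k φ i n) ^ 2
      ≤ 4 / ((2 * n + 1) ^ 2 * (2 * n - 1)) *
        ∑ m ∈ Icc 1 (2 * n - 1), (m : ℝ) ^ 2 * shiftEnergy φ m := by
  have hN : (0 : ℝ) < 2 * n - 1 := by
    have : (1 : ℝ) ≤ n := by exact_mod_cast hn
    linarith
  set S := ∑ m ∈ Icc 1 (2 * n - 1), (m : ℝ) ^ 2 * shiftEnergy φ m
  have hX : ∑ i, (φ (i + n) - localAvg k φ i n) ^ 2 ≤ (2 * n - 1 : ℝ)⁻¹ * S := by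
    refine (sum_sq_add_sub_localAvg_le φ _ hn).trans ?_
    rw [sum_Icc_shiftSq_natCast_sub]
    gcongr
    exact sum_Icc_shiftSq_le φ _
  have hY : ∑ i, (φ (i - n) - localAvg k φ i n) ^ 2 ≤ (2 * n - 1 : ℝ)⁻¹ * S := by
    simp_rw [sub_eq_add_neg (_ : ZMod k)]
    refine (sum_sq_add_sub_localAvg_le φ _ hn).trans ?_
    rw [sum_Icc_shiftSq_neg_natCast_sub]
    gcongr
    exact sum_Icc_shiftSq_le φ _
  have hpoint : ∀ i, (localAvg k φ i (n + 1) - localAvg k φ i n) ^ 2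
      ≤ 2 / (2 * n + 1) ^ 2 * ((φ (i + n) - localAvg k φ i n) ^ 2
        + (φ (i - n) - localAvg k φ i n) ^ 2) := by
    intro i
    set X := φ (i + n) - localAvg k φ i n
    set Y := φ (i - n) - localAvg k φ i n
    have hrec := localAvg_succ φ i hn
    have hdiff : localAvg k φ i (n + 1) - localAvg k φ i n = (X + Y) / (2 * n + 1) := by
      field_simp
      linarith
    calc _ = (X + Y) ^ 2 / (2 * n + 1) ^ 2 := by rw [hdiff, div_pow]
      _ ≤ 2 * (X ^ 2 + Y ^ 2) / (2 * n + 1) ^ 2 := by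
        gcongr
        nlinarith [sq_nonneg (X - Y)]
      _ = _ := by ring
  calc _ ≤ ∑ i, 2 / (2 * n + 1) ^ 2 * ((φ (i + n) - localAvg k φ i n) ^ 2
        + (φ (i - n) - localAvg k φ i n) ^ 2) := sum_le_sum fun i _ => hpoint i
    _ = 2 / (2 * n + 1) ^ 2 * (∑ i, (φ (i + n) - localAvg k φ i n) ^ 2
        + ∑ i, (φ (i - n) - localAvg k φ i n) ^ 2) := by rw [← mul_sum, sum_add_distrib]
    _ ≤ 2 / (2 * n + 1) ^ 2 * ((2 * n - 1 : ℝ)⁻¹ * S + (2 * n - 1 : ℝ)⁻¹ * S) := by gcongr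
    _ = _ := by
      field_simp
      ring

lemma sum_sum_sq_localAvg_succ_sub_le {L : ℕ} (hL : 2 * L - 1 < k) :
    ∑ n ∈ Icc 1 L, ∑ i, (localAvg k φ i (n + 1) - localAvg k φ i n) ^ 2 ≤ 2 * bSemiSq k φ := by
  calc _ ≤ ∑ n ∈ Icc 1 L, ∑ m ∈ Icc 1 (2 * n - 1),
        4 / ((2 * n + 1) ^ 2 * (2 * n - 1)) * ((m : ℝ) ^ 2 * shiftEnergy φ m) :=
      sum_le_sum fun n hn => (sum_sq_localAvg_succ_sub_le φ (mem_Icc.mp hn).1).trans_eq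
        (mul_sum _ _ _)
    _ = ∑ m ∈ Icc 1 (2 * L - 1), ∑ n ∈ Icc ((m + 2) / 2) L,
        4 / ((2 * n + 1) ^ 2 * (2 * n - 1)) * ((m : ℝ) ^ 2 * shiftEnergy φ m) :=
      sum_comm' fun n m => by simp only [mem_Icc]; omega
    _ ≤ ∑ m ∈ Icc 1 (2 * L - 1), shiftEnergy φ m := by
      refine sum_le_sum fun m hm => ?_
      have hm1 : (1 : ℝ) ≤ m := by exact_mod_cast (mem_Icc.mp hm).1
      have hmid : (m : ℝ) ≤ 2 * ((m + 2) / 2 : ℕ) - 1 := by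
        have : m + 1 ≤ 2 * ((m + 2) / 2) := by omega
        have : ((m + 1 : ℕ) : ℝ) ≤ ((2 * ((m + 2) / 2) : ℕ) : ℝ) := by exact_mod_cast this
        push_cast at this
        linarith
      rw [← sum_mul]
      calc _ ≤ 1 / (2 * (((m + 2) / 2 : ℕ) : ℝ) - 1) ^ 2 * ((m : ℝ) ^ 2 * shiftEnergy φ m) := by
            gcongr
            · exact mul_nonneg (sq_nonneg _) (shiftEnergy_nonneg φ _)
            · exact sum_Icc_inv_cube_le (by omega) L
        _ ≤ 1 / (m : ℝ) ^ 2 * ((m : ℝ) ^ 2 * shiftEnergy φ m) := by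
            gcongr
            exact mul_nonneg (sq_nonneg _) (shiftEnergy_nonneg φ _)
        _ = shiftEnergy φ m := by field_simp
    _ ≤ 2 * bSemiSq k φ :=
      sum_shiftEnergy_natCast_le φ _ id (Set.injOn_id _) fun m hm => by
        simp only [mem_Icc, id] at hm ⊢
        omega

end Bounds

section Extension

variable {k ℓ : ℕ} [NeZero k] (φ : ZMod k → ℝ)

lemma avgExt_one (i : ZMod k) : avgExt k ℓ φ i 1 = φ i := by
  simp [avgExt, localAvg_one]

lemma avgExt_add_one_sub (i : ZMod k) (j : ℕ) :
    avgExt k ℓ φ (i + 1) j - avgExt k ℓ φ i j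
      = (1 - ((j : ℝ) - 1) / ((ℓ : ℝ) - 1)) * (localAvg k φ (i + 1) j - localAvg k φ i j) := by
  unfold avgExt
  ring

lemma avgExt_succ_sub (hℓ : (ℓ : ℝ) - 1 ≠ 0) (i : ZMod k) (j : ℕ) :
    avgExt k ℓ φ i (j + 1) - avgExt k ℓ φ i j
      = (globalAvg k φ - localAvg k φ i (j + 1)) / ((ℓ : ℝ) - 1)
        + (1 - ((j : ℝ) - 1) / ((ℓ : ℝ) - 1)) * (localAvg k φ i (j + 1) - localAvg k φ i j) := by
  unfold avgExt
  push_cast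
  field_simp
  ring

lemma sum_sum_sq_avgExt_add_one_sub_le (hℓ : 2 * ℓ - 1 < k) :
    ∑ i, ∑ j ∈ Icc 1 ℓ, (avgExt k ℓ φ (i + 1) j - avgExt k ℓ φ i j) ^ 2 ≤ 2 * bSemiSq k φ := by
  rw [sum_comm]
  calc _ ≤ ∑ j ∈ Icc 1 ℓ, shiftEnergy φ ((2 * j - 1 : ℕ) : ZMod k) := by
        refine sum_le_sum fun j hj => ?_
        obtain ⟨hj1, hjℓ⟩ := mem_Icc.mp hj
        have ht : (1 - ((j : ℝ) - 1) / ((ℓ : ℝ) - 1)) ^ 2 ≤ 1 :=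
          one_sub_div_sq_le_one (by simp [hj1]) (by simp [hjℓ])
        simp_rw [avgExt_add_one_sub, mul_pow]
        rw [← mul_sum]
        calc _ ≤ 1 * ∑ i, (localAvg k φ (i + 1) j - localAvg k φ i j) ^ 2 := by gcongr
          _ ≤ _ := by rw [one_mul]; exact sum_sq_localAvg_add_one_sub_le φ hj1
    _ ≤ 2 * bSemiSq k φ :=
      sum_shiftEnergy_natCast_le φ _ (fun j => 2 * j - 1)
        (fun x hx y hy h => by simp only [coe_Icc, Set.mem_Icc] at hx hy h; omega)
        fun j hj => by simp only [mem_Icc] at hj; omega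

lemma sum_sum_sq_avgExt_succ_sub_le (hℓ : 2 ≤ ℓ) (hk : 2 * ℓ - 3 < k) :
    ∑ i, ∑ j ∈ Icc 1 (ℓ - 1), (avgExt k ℓ φ i (j + 1) - avgExt k ℓ φ i j) ^ 2
      ≤ (k / (2 * ((ℓ : ℝ) - 1)) + 4) * bSemiSq k φ := by
  have hℓ' : (0 : ℝ) < (ℓ : ℝ) - 1 := by
    have : (2 : ℝ) ≤ ℓ := by exact_mod_cast hℓ
    linarith
  have hpoint : ∀ j ∈ Icc 1 (ℓ - 1), ∀ i, (avgExt k ℓ φ i (j + 1) - avgExt k ℓ φ i j) ^ 2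
      ≤ 2 / ((ℓ : ℝ) - 1) ^ 2 * (globalAvg k φ - localAvg k φ i (j + 1)) ^ 2
        + 2 * (localAvg k φ i (j + 1) - localAvg k φ i j) ^ 2 := by
    intro j hj i
    obtain ⟨hj1, hjℓ⟩ := mem_Icc.mp hj
    have ht : (1 - ((j : ℝ) - 1) / ((ℓ : ℝ) - 1)) ^ 2 ≤ 1 :=
      one_sub_div_sq_le_one (by simp [hj1])
        (sub_le_sub_right (by exact_mod_cast (by omega : j ≤ ℓ)) 1)
    rw [avgExt_succ_sub φ hℓ'.ne']
    set A := globalAvg k φ - localAvg k φ i (j + 1)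
    set B := localAvg k φ i (j + 1) - localAvg k φ i j
    set t := 1 - ((j : ℝ) - 1) / ((ℓ : ℝ) - 1)
    calc (A / ((ℓ : ℝ) - 1) + t * B) ^ 2 ≤ 2 * (A / ((ℓ : ℝ) - 1)) ^ 2 + 2 * (t ^ 2 * B ^ 2) := by
          nlinarith [sq_nonneg (A / ((ℓ : ℝ) - 1) - t * B)]
      _ ≤ 2 * (A / ((ℓ : ℝ) - 1)) ^ 2 + 2 * (1 * B ^ 2) := by gcongr
      _ = _ := by rw [div_pow]; ring
  have hcard : ((#(Icc 1 (ℓ - 1)) : ℕ) : ℝ) = (ℓ : ℝ) - 1 := by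
    rw [Nat.card_Icc, Nat.add_sub_cancel, Nat.cast_sub (by omega)]
    push_cast
    ring
  rw [sum_comm]
  calc _ ≤ ∑ j ∈ Icc 1 (ℓ - 1), (2 / ((ℓ : ℝ) - 1) ^ 2 * (k / 4 * bSemiSq k φ)
        + 2 * ∑ i, (localAvg k φ i (j + 1) - localAvg k φ i j) ^ 2) := by
        refine sum_le_sum fun j hj => ?_
        refine (sum_le_sum fun i _ => hpoint j hj i).trans ?_
        rw [sum_add_distrib, ← mul_sum, ← mul_sum]
        gcongr
        exact sum_sq_globalAvg_sub_localAvg_le φ (by omega)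
    _ ≤ (ℓ - 1) * (2 / ((ℓ : ℝ) - 1) ^ 2 * (k / 4 * bSemiSq k φ)) + 2 * (2 * bSemiSq k φ) := by
        rw [sum_add_distrib, sum_const, nsmul_eq_mul, hcard, ← mul_sum]
        gcongr
        exact sum_sum_sq_localAvg_succ_sub_le φ (by omega)
    _ = _ := by
        field_simp
        ring

end Extension

/-- Continuous right inverse of the discrete trace operator: assuming
`ℓ ≥ 2`, for every `φ : ℤ/kℤ → ℝ` the averaging extension `u` satisfies
`u(i,1) = φ(i)` for all `i` and `|u|_G² ≤ (2c + 233/9) · |φ|_Γ²`. -/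
theorem discrete_trace_right_inverse (k ℓ c : ℕ) [NeZero k]
    (h1 : 4 * ℓ < k) (h2 : k < 2 * c * ℓ) (hℓ : 2 ≤ ℓ)
    (φ : ZMod k → ℝ) :
    (∀ i : ZMod k, avgExt k ℓ φ i 1 = φ i) ∧
    energySq k ℓ (avgExt k ℓ φ) ≤ (2 * (c : ℝ) + 233 / 9) * bSemiSq k φ := by
  refine ⟨avgExt_one φ, ?_⟩
  have hc : (k : ℝ) / (2 * ((ℓ : ℝ) - 1)) ≤ 2 * c := by
    have hkc : (k : ℝ) < 2 * c * ℓ := by exact_mod_cast h2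
    have hℓ' : (2 : ℝ) ≤ ℓ := by exact_mod_cast hℓ
    rw [div_le_iff₀ (by linarith)]
    nlinarith [(Nat.cast_nonneg c : (0 : ℝ) ≤ c)]
  have hH := sum_sum_sq_avgExt_add_one_sub_le φ (ℓ := ℓ) (by omega)
  have hV := sum_sum_sq_avgExt_succ_sub_le φ hℓ (by omega)
  have hb := bSemiSq_nonneg φ
  rw [energySq]
  nlinarith
end
end
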